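/- For every good quasiterm X (i.e., qGood X) and every varsort xs, the set of variables fresh for X at varsort xs has cardinality equal to that of var: |{x : var | qFresh xs x X}| = |var|. -/

import Mathlib

open scoped Classical

universe u

section Binding

variable (var varsort index bindex opsym : Type u)

/-! ### Inputs -/

/-- An `(α,β)`-input: a partial function from `α` to `β`. -/
abbrev Input (α β : Type u) : Type u := α → Option β

/-- The domain of an input. -/
def idom {α β : Type u} (inp : Input α β) : Set α := {a | inp a ≠ none}

/-- The componentwise lifting of a predicate to inputs. -/
def liftP {α β : Type u} (P : β → Prop) (inp : Input α β) : Prop :=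
  ∀ a b, inp a = some b → P b

/-- The componentwise lifting of a function to inputs. -/
def liftF {α β γ : Type u} (f : β → γ) (inp : Input α β) : Input α γ :=
  fun a => (inp a).map f

/-- An input is small if its domain has cardinality smaller than that of `var`. -/
def smallDom {α β : Type u} (inp : Input α β) : Prop :=
  Cardinal.mk (idom inp) < Cardinal.mk var

/-! ### Quasiterms -/

mutual
/-- Quasiterms: raw terms before quotienting by alpha-equivalence. -/
inductive QTerm : Type u where
  | qVar : varsort → var → QTerm
  | qOp : opsym → (index → Option QTerm) → (bindex → Option QAbs) → QTerm
/-- Quasiabstractions. -/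
inductive QAbs : Type u where
  | qAbs : varsort → var → QTerm → QAbs
end

/-- Transposition of two variables. -/
noncomputable def swapVar (z1 z2 x : var) : var :=
  if x = z1 then z2 else if x = z2 then z1 else x

/-- Sort-aware transposition of variables (acts only on variables of varsort `zs`). -/
noncomputable def swapVarS (zs xs : varsort) (z1 z2 x : var) : var :=
  if xs = zs then swapVar var z1 z2 x else x

variable {var varsort index bindex opsym}

/-- Swapping of the variables `z1`, `z2` at varsort `zs` in a quasiterm
(transposing them everywhere, including binding positions). -/
noncomputable def qSwap (z1 z2 : var) (zs : varsort) :
    QTerm var varsort index bindex opsym → QTerm var varsort index bindex opsym :=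
  QTerm.rec (motive_1 := fun _ => QTerm var varsort index bindex opsym)
    (motive_2 := fun _ => QAbs var varsort index bindex opsym)
    (motive_3 := fun _ => Option (QTerm var varsort index bindex opsym))
    (motive_4 := fun _ => Option (QAbs var varsort index bindex opsym))
    (fun xs x => .qVar xs (swapVarS var varsort zs xs z1 z2 x))
    (fun d _ _ rinp rbinp => .qOp d rinp rbinp)
    (fun xs x _ rX => .qAbs xs (swapVarS var varsort zs xs z1 z2 x) rX)
    none (fun _ r => some r) none (fun _ r => some r)

/-- Swapping of variables in a quasiabstraction. -/
noncomputable def qSwapAbs (z1 z2 : var) (zs : varsort) :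
    QAbs var varsort index bindex opsym → QAbs var varsort index bindex opsym
  | .qAbs xs x X => .qAbs xs (swapVarS var varsort zs xs z1 z2 x) (qSwap z1 z2 zs X)

/-! ### Freshness and goodness -/

mutual
/-- `QFresh ys y X`: the variable `y` of varsort `ys` has no free occurrence in `X`. -/
inductive QFresh : varsort → var → QTerm var varsort index bindex opsym → Prop where
  | qVar : ∀ {ys y xs x}, (ys, y) ≠ (xs, x) → QFresh ys y (.qVar xs x)
  | qOp : ∀ {ys y d inp binp}, (∀ i X, inp i = some X → QFresh ys y X) →
      (∀ j A, binp j = some A → QFreshAbs ys y A) → QFresh ys y (.qOp d inp binp)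
/-- Freshness for quasiabstractions. -/
inductive QFreshAbs : varsort → var → QAbs var varsort index bindex opsym → Prop where
  | qAbs_bound : ∀ {xs x X}, QFreshAbs xs x (.qAbs xs x X)
  | qAbs_body : ∀ {ys y xs x X}, QFresh ys y X → QFreshAbs ys y (.qAbs xs x X)
end

mutual
/-- Good quasiterms: all constructors branch less than `|var|`. -/
inductive QGood : QTerm var varsort index bindex opsym → Prop where
  | qVar : ∀ {xs x}, QGood (.qVar xs x)
  | qOp : ∀ {d inp binp}, (∀ i X, inp i = some X → QGood X) →
      (∀ j A, binp j = some A → QGoodAbs A) →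
      smallDom var inp → smallDom var binp → QGood (.qOp d inp binp)
/-- Good quasiabstractions. -/
inductive QGoodAbs : QAbs var varsort index bindex opsym → Prop where
  | qAbs : ∀ {xs x X}, QGood X → QGoodAbs (.qAbs xs x X)
end

/-! ### Alpha-equivalence -/

mutual
/-- Alpha-equivalence of quasiterms. -/
inductive Alpha : QTerm var varsort index bindex opsym →
    QTerm var varsort index bindex opsym → Prop where
  | qVar : ∀ {xs x}, Alpha (.qVar xs x) (.qVar xs x)
  | qOp : ∀ {d inp binp inp' binp'},
      (∀ i, inp i = none ↔ inp' i = none) →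
      (∀ i X X', inp i = some X → inp' i = some X' → Alpha X X') →
      (∀ j, binp j = none ↔ binp' j = none) →
      (∀ j A A', binp j = some A → binp' j = some A' → AlphaAbs A A') →
      Alpha (.qOp d inp binp) (.qOp d inp' binp')
/-- Alpha-equivalence of quasiabstractions (the exists-fresh formulation). -/
inductive AlphaAbs : QAbs var varsort index bindex opsym →
    QAbs var varsort index bindex opsym → Prop where
  | qAbs : ∀ {xs x x' X X' y}, y ∉ ({x, x'} : Set var) →
      QFresh xs y X → QFresh xs y X' →
      Alpha (qSwap y x xs X) (qSwap y x' xs X') →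
      AlphaAbs (.qAbs xs x X) (.qAbs xs x' X')
end

/-! ### Terms and abstractions as quotients -/

variable (var varsort index bindex opsym)

/-- Terms: quasiterms modulo alpha-equivalence. -/
def Term : Type u := Quot (@Alpha var varsort index bindex opsym)

/-- Abstractions: quasiabstractions modulo alpha-equivalence. -/
def Abstr : Type u := Quot (@AlphaAbs var varsort index bindex opsym)

variable {var varsort index bindex opsym}

/-- The projection from quasiterms to terms. -/
def tmk : QTerm var varsort index bindex opsym → Term var varsort index bindex opsym :=
  Quot.mk _

/-- The projection from quasiabstractions to abstractions. -/
def amk : QAbs var varsort index bindex opsym → Abstr var varsort index bindex opsym :=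
  Quot.mk _

/-- A representative of a term. -/
noncomputable def trep (X : Term var varsort index bindex opsym) :
    QTerm var varsort index bindex opsym := Quot.out X

/-- A representative of an abstraction. -/
noncomputable def arep (A : Abstr var varsort index bindex opsym) :
    QAbs var varsort index bindex opsym := Quot.out A

/-- Good terms. -/
def good (X : Term var varsort index bindex opsym) : Prop := QGood (trep X)

/-- Good abstractions. -/
def goodAbs (A : Abstr var varsort index bindex opsym) : Prop := QGoodAbs (arep A)

/-- The variable-injection constructor on terms. -/
def Var (xs : varsort) (x : var) : Term var varsort index bindex opsym :=
  tmk (.qVar xs x)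

/-- The operation constructor on terms. -/
noncomputable def Op (d : opsym) (inp : Input index (Term var varsort index bindex opsym))
    (binp : Input bindex (Abstr var varsort index bindex opsym)) :
    Term var varsort index bindex opsym :=
  tmk (.qOp d (liftF trep inp) (liftF arep binp))

/-- The abstraction constructor. -/
noncomputable def Abs (xs : varsort) (x : var) (X : Term var varsort index bindex opsym) :
    Abstr var varsort index bindex opsym :=
  amk (.qAbs xs x (trep X))

/-- Freshness on terms. -/
def fresh (ys : varsort) (y : var) (X : Term var varsort index bindex opsym) : Prop :=
  QFresh ys y (trep X)

/-- Freshness on abstractions. -/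
def freshAbs (ys : varsort) (y : var) (A : Abstr var varsort index bindex opsym) : Prop :=
  QFreshAbs ys y (arep A)

/-- Swapping on terms. -/
noncomputable def tswap (X : Term var varsort index bindex opsym)
    (z1 z2 : var) (zs : varsort) : Term var varsort index bindex opsym :=
  tmk (qSwap z1 z2 zs (trep X))

/-! ### Substitution -/

mutual
/-- The graph of capture-avoiding substitution on quasiterms:
`QSubst X Y y ys Z` means that `Z` is a result of substituting `Y` for the free
occurrences of the variable `y` of varsort `ys` in `X` (along a capture-free
representative). -/
inductive QSubst : QTerm var varsort index bindex opsym →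
    QTerm var varsort index bindex opsym → var → varsort →
    QTerm var varsort index bindex opsym → Prop where
  | var_eq : ∀ {Y y ys}, QSubst (.qVar ys y) Y y ys Y
  | var_ne : ∀ {Y y ys xs x}, (xs, x) ≠ (ys, y) → QSubst (.qVar xs x) Y y ys (.qVar xs x)
  | op : ∀ {Y y ys d inp binp inp' binp'},
      (∀ i, inp i = none ↔ inp' i = none) →
      (∀ i X X', inp i = some X → inp' i = some X' → QSubst X Y y ys X') →
      (∀ j, binp j = none ↔ binp' j = none) →
      (∀ j A A', binp j = some A → binp' j = some A' → QSubstAbs A Y y ys A') →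
      QSubst (.qOp d inp binp) Y y ys (.qOp d inp' binp')
/-- The graph of capture-avoiding substitution on quasiabstractions. -/
inductive QSubstAbs : QAbs var varsort index bindex opsym →
    QTerm var varsort index bindex opsym → var → varsort →
    QAbs var varsort index bindex opsym → Prop where
  | abs : ∀ {Y y ys xs x X X'}, (xs, x) ≠ (ys, y) → QFresh xs x Y →
      QSubst X Y y ys X' → QSubstAbs (.qAbs xs x X) Y y ys (.qAbs xs x X')
end

/-- The graph of capture-avoiding substitution on terms. -/
def SubstRel (X Y : Term var varsort index bindex opsym) (y : var) (ys : varsort)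
    (Z : Term var varsort index bindex opsym) : Prop :=
  ∃ qX qZ, tmk qX = X ∧ tmk qZ = Z ∧ QSubst qX (trep Y) y ys qZ

/-- Capture-avoiding substitution on terms: `subst X Y y ys` is `X[Y/y]_ys`. -/
noncomputable def subst (X Y : Term var varsort index bindex opsym)
    (y : var) (ys : varsort) : Term var varsort index bindex opsym :=
  if h : ∃ Z, SubstRel X Y y ys Z then h.choose else X

/-- The graph of capture-avoiding substitution on abstractions. -/
def SubstAbsRel (A : Abstr var varsort index bindex opsym)
    (Y : Term var varsort index bindex opsym) (y : var) (ys : varsort)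
    (B : Abstr var varsort index bindex opsym) : Prop :=
  ∃ qA qB, amk qA = A ∧ amk qB = B ∧ QSubstAbs qA (trep Y) y ys qB

/-- Capture-avoiding substitution on abstractions: `substAbs A Y y ys` is `A[Y/y]_ys`. -/
noncomputable def substAbs (A : Abstr var varsort index bindex opsym)
    (Y : Term var varsort index bindex opsym) (y : var) (ys : varsort) :
    Abstr var varsort index bindex opsym :=
  if h : ∃ B, SubstAbsRel A Y y ys B then h.choose else A

/-! ### Parallel substitution -/

mutual
/-- The graph of capture-avoiding parallel substitution on quasiterms, along an
assignment `ρ : varsort → var → Option qterm`. -/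
inductive QPSubst : QTerm var varsort index bindex opsym →
    (varsort → var → Option (QTerm var varsort index bindex opsym)) →
    QTerm var varsort index bindex opsym → Prop where
  | var_some : ∀ {ρ xs x Y}, ρ xs x = some Y → QPSubst (.qVar xs x) ρ Y
  | var_none : ∀ {ρ xs x}, ρ xs x = none → QPSubst (.qVar xs x) ρ (.qVar xs x)
  | op : ∀ {ρ d inp binp inp' binp'},
      (∀ i, inp i = none ↔ inp' i = none) →
      (∀ i X X', inp i = some X → inp' i = some X' → QPSubst X ρ X') →
      (∀ j, binp j = none ↔ binp' j = none) →
      (∀ j A A', binp j = some A → binp' j = some A' → QPSubstAbs A ρ A') →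
      QPSubst (.qOp d inp binp) ρ (.qOp d inp' binp')
/-- The graph of capture-avoiding parallel substitution on quasiabstractions. -/
inductive QPSubstAbs : QAbs var varsort index bindex opsym →
    (varsort → var → Option (QTerm var varsort index bindex opsym)) →
    QAbs var varsort index bindex opsym → Prop where
  | abs : ∀ {ρ xs x X X'}, ρ xs x = none →
      (∀ ys y Y, ρ ys y = some Y → QFresh xs x Y) →
      QPSubst X ρ X' → QPSubstAbs (.qAbs xs x X) ρ (.qAbs xs x X')
end

/-- Turning a term-valued assignment into a quasiterm-valued one, by picking
representatives. -/
noncomputable def qassign (ρ : varsort → var → Option (Term var varsort index bindex opsym)) :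
    varsort → var → Option (QTerm var varsort index bindex opsym) :=
  fun xs x => (ρ xs x).map trep

/-- The graph of parallel substitution on terms. -/
def PSubstRel (X : Term var varsort index bindex opsym)
    (ρ : varsort → var → Option (Term var varsort index bindex opsym))
    (Z : Term var varsort index bindex opsym) : Prop :=
  ∃ qX qZ, tmk qX = X ∧ tmk qZ = Z ∧ QPSubst qX (qassign ρ) qZ

/-- Capture-avoiding parallel substitution on terms: `psubst X ρ` is `X[ρ]`. -/
noncomputable def psubst (X : Term var varsort index bindex opsym)
    (ρ : varsort → var → Option (Term var varsort index bindex opsym)) :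
    Term var varsort index bindex opsym :=
  if h : ∃ Z, PSubstRel X ρ Z then h.choose else X

/-- The graph of parallel substitution on abstractions. -/
def PSubstAbsRel (A : Abstr var varsort index bindex opsym)
    (ρ : varsort → var → Option (Term var varsort index bindex opsym))
    (B : Abstr var varsort index bindex opsym) : Prop :=
  ∃ qA qB, amk qA = A ∧ amk qB = B ∧ QPSubstAbs qA (qassign ρ) qB

/-- Capture-avoiding parallel substitution on abstractions. -/
noncomputable def psubstAbs (A : Abstr var varsort index bindex opsym)
    (ρ : varsort → var → Option (Term var varsort index bindex opsym)) :
    Abstr var varsort index bindex opsym :=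
  if h : ∃ B, PSubstAbsRel A ρ B then h.choose else A

/-! Fewer than `|var|` variables occur free in a good quasiterm: a variable contributes one,
an abstraction no more than its body, and an operation a union of fewer than `|var|` such sets,
which stays below `|var|` because `|var|` is regular. The fresh variables are the complement of
this small set in the infinite type `var`. -/

open Cardinal

theorem mk_biUnion_input_lt {α β γ : Type u} {c : Cardinal} (hc : c.IsRegular)
    {inp : Input α β} (hinp : #(idom inp) < c) {S : β → Set γ}
    (hS : liftP (fun b => #(S b) < c) inp) :
    #(⋃ a ∈ idom inp, ⋃ b ∈ inp a, S b) < c := by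
  rw [card_biUnion_lt_iff_forall_of_isRegular hc hinp]
  intro a ha
  obtain ⟨b, hb⟩ := Option.ne_none_iff_exists'.mp ha
  simpa [hb] using hS a b hb

theorem setOf_not_qFresh_qOp_subset (ys : varsort) (d : opsym)
    (inp : Input index (QTerm var varsort index bindex opsym))
    (binp : Input bindex (QAbs var varsort index bindex opsym)) :
    {y | ¬ QFresh ys y (.qOp d inp binp)} ⊆
      (⋃ i ∈ idom inp, ⋃ X ∈ inp i, {y | ¬ QFresh ys y X}) ∪
        ⋃ j ∈ idom binp, ⋃ A ∈ binp j, {y | ¬ QFreshAbs ys y A} := by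
  intro y hy
  by_contra hmem
  simp only [Set.mem_union, Set.mem_iUnion, Set.mem_ofPred_eq, not_or, not_exists,
    not_not] at hmem
  exact hy (.qOp (fun i X hi => hmem.1 i (by simp [idom, hi]) X hi)
    (fun j A hj => hmem.2 j (by simp [idom, hj]) A hj))

theorem mk_setOf_not_qFresh_lt (hreg : (#var).IsRegular)
    {X : QTerm var varsort index bindex opsym} (hX : QGood X) (ys : varsort) :
    #{y | ¬ QFresh ys y X} < #var := by
  induction hX using QGood.rec
    (motive_2 := fun A _ => ∀ ys, #{y | ¬ QFreshAbs ys y A} < #var) generalizing ys with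
  | @qVar xs x =>
    have hsub : {y | ¬ QFresh ys y (.qVar xs x : QTerm var varsort index bindex opsym)} ⊆ {x} :=
      fun y hy => by_contra fun hne => hy (.qVar fun h => hne (congrArg Prod.snd h))
    refine (mk_le_mk_of_subset hsub).trans_lt ?_
    rw [mk_singleton]
    exact one_lt_aleph0.trans_le hreg.aleph0_le
  | qOp _ _ hinp hbinp ih ihAbs =>
    refine (mk_le_mk_of_subset (setOf_not_qFresh_qOp_subset ys _ _ _)).trans_lt ?_
    exact (mk_union_le _ _).trans_lt <| add_lt_of_lt hreg.aleph0_le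
      (mk_biUnion_input_lt hreg hinp fun i X hi => ih i X hi ys)
      (mk_biUnion_input_lt hreg hbinp fun j A hj => ihAbs j A hj ys)
  | @qAbs xs x X _ ih ys =>
    have hsub : {y | ¬ QFreshAbs ys y (.qAbs xs x X)} ⊆ {y | ¬ QFresh ys y X} :=
      fun y hy hfresh => hy (.qAbs_body hfresh)
    exact (mk_le_mk_of_subset hsub).trans_lt (ih ys)

/-- For every good quasiterm `X` and every varsort `xs`, the set of
variables fresh for `X` at varsort `xs` has cardinality equal to that of `var`. -/
theorem fresh_variables_card (hinf : Cardinal.aleph0 ≤ Cardinal.mk var)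
    (hreg : (Cardinal.mk var).IsRegular)
    (X : QTerm var varsort index bindex opsym) (hX : QGood X) :
    ∀ xs : varsort, Cardinal.mk {x : var // QFresh xs x X} = Cardinal.mk var := by
  intro xs
  have : Infinite var := infinite_iff.mpr hinf
  have hcompl := mk_compl_of_infinite _ (mk_setOf_not_qFresh_lt hreg hX xs)
  simp only [Set.compl_ofPred, not_not] at hcompl
  exact hcompl

end Binding
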